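/- Let β_t be a CPM and ρ^z_t its induced risk measure for z_d < z < z_u. Then ρ^z_t is continuous from below: X_n ↑ X in L^{bb}_T implies ρ^z_t(X_n) ↓ ρ^z_t(X). -/

import Mathlib

open MeasureTheory Filter Set Topology

noncomputable section

variable {Ω : Type*}

/-- The lattice of `m`-measurable random variables bounded from below
(possibly `+∞`-valued). -/
def Lbb (m : MeasurableSpace Ω) : Set (Ω → EReal) :=
  {X | Measurable[m] X ∧ ∃ c : ℝ, ∀ ω, (c : EReal) ≤ X ω}

/-- `ρ` is the `P`-essential infimum of the family `S` of (`m`-measurable)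
random variables. -/
def IsEssInfFam {F : MeasurableSpace Ω} (m : MeasurableSpace Ω) (P : @Measure Ω F)
    (S : Set (Ω → EReal)) (ρ : Ω → EReal) : Prop :=
  Measurable[m] ρ ∧ (∀ ξ ∈ S, ∀ᵐ ω ∂P, ρ ω ≤ ξ ω) ∧
    ∀ η : Ω → EReal, Measurable[m] η → (∀ ξ ∈ S, ∀ᵐ ω ∂P, η ω ≤ ξ ω) →
      ∀ᵐ ω ∂P, η ω ≤ ρ ω

/-- `g` is, on the set `C`, the `P`-essential supremum of the family `S`. -/
def IsEssSupFamOn {F : MeasurableSpace Ω} (m : MeasurableSpace Ω) (P : @Measure Ω F)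
    (S : Set (Ω → EReal)) (g : Ω → EReal) (C : Set Ω) : Prop :=
  (∀ φ ∈ S, ∀ᵐ ω ∂P, ω ∈ C → φ ω ≤ g ω) ∧
    ∀ η : Ω → EReal, Measurable[m] η → (∀ φ ∈ S, ∀ᵐ ω ∂P, ω ∈ C → φ ω ≤ η ω) →
      ∀ᵐ ω ∂P, ω ∈ C → g ω ≤ η ω

/-- A conditional performance measure (CPM) `β` conditional to the sub-σ-algebra `m`,
defined on `F`-measurable variables bounded from below, with non-random essential
bounds `zd < zu`. -/
structure IsCPM (F m : MeasurableSpace Ω) (P : @Measure Ω F)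
    (β : (Ω → EReal) → Ω → EReal) (zd zu : EReal) : Prop where
  maps : ∀ X ∈ Lbb F, β X ∈ Lbb m
  quasiConcave : ∀ X ∈ Lbb F, ∀ Y ∈ Lbb F, ∀ c : ℝ, 0 ≤ c → c ≤ 1 →
    ∀ᵐ ω ∂P, min (β X ω) (β Y ω) ≤
      β (fun ω' => (c : EReal) * X ω' + ((1 - c : ℝ) : EReal) * Y ω') ω
  lt_bounds : zd < zu
  le_zu : ∀ X ∈ Lbb F, ∀ᵐ ω ∂P, β X ω ≤ zu
  zu_least : ∀ η : Ω → EReal, Measurable[m] η →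
    (∀ X ∈ Lbb F, ∀ᵐ ω ∂P, β X ω ≤ η ω) → ∀ᵐ ω ∂P, zu ≤ η ω
  zd_le : ∀ X ∈ Lbb F, ∀ᵐ ω ∂P, zd ≤ β X ω
  zd_greatest : ∀ η : Ω → EReal, Measurable[m] η →
    (∀ X ∈ Lbb F, ∀ᵐ ω ∂P, η ω ≤ β X ω) → ∀ᵐ ω ∂P, η ω ≤ zd
  mono : ∀ X Y : Ω → EReal, (∀ ω, Y ω ≤ X ω) → ∀ᵐ ω ∂P, β Y ω ≤ β X ω
  strictShift : ∀ X ∈ Lbb F, ∀ c : ℝ, 0 < c →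
    ∀ᵐ ω ∂P, β X ω < zu → zd < β (fun ω' => X ω' + (c : EReal)) ω →
      β X ω < β (fun ω' => X ω' + (c : EReal)) ω
  contBelow : ∀ (Xs : ℕ → Ω → EReal) (X : Ω → EReal), (∀ n, Xs n ∈ Lbb F) → X ∈ Lbb F →
    (∀ ω, Monotone fun n => Xs n ω) → (∀ ω, X ω = ⨆ n, Xs n ω) →
    ∀ᵐ ω ∂P, β X ω = ⨆ n, β (Xs n) ω
  loc : ∀ X ∈ Lbb F, ∀ B : Set Ω, MeasurableSet[m] B →
    ∀ᵐ ω ∂P, ω ∈ B → β X ω = β (B.indicator X) ω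
  levelBdd : ∀ z : ℝ, zd < (z : EReal) → (z : EReal) < zu →
    ∃ x : ℝ, ∀ ξ ∈ Lbb m, (∀ᵐ ω ∂P, (z : EReal) ≤ β ξ ω) → ∀ᵐ ω ∂P, (x : EReal) ≤ ξ ω

/-- Scale invariance of a conditional performance measure. -/
def ScaleInvariant (F : MeasurableSpace Ω) (P : @Measure Ω F)
    (β : (Ω → EReal) → Ω → EReal) : Prop :=
  ∀ X ∈ Lbb F, ∀ c : ℝ, 0 < c → ∀ᵐ ω ∂P, β (fun ω' => (c : EReal) * X ω') ω = β X ω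

/-- The set `M^z_t(X) = {ξ ∈ L^{bb}_t : β_t(X + ξ) ≥ z}`. -/
def Mset (F m : MeasurableSpace Ω) (P : @Measure Ω F)
    (β : (Ω → EReal) → Ω → EReal) (z : ℝ) (X : Ω → EReal) : Set (Ω → EReal) :=
  {ξ | ξ ∈ Lbb m ∧ ∀ᵐ ω ∂P, (z : EReal) ≤ β (fun ω' => X ω' + ξ ω') ω}

/-- The family of simple `m`-measurable variables `φ = Σ z_i 1_{B_i}` with
`zd < φ < zu` and `ρ^{z_i} < 0` on `B_i ∩ C`. -/
def SimpleFam {F : MeasurableSpace Ω} (m : MeasurableSpace Ω) (P : @Measure Ω F)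
    (ρ : ℝ → Ω → EReal) (zd zu : EReal) (C : Set Ω) : Set (Ω → EReal) :=
  {φ | ∃ (n : ℕ) (zs : Fin n → ℝ) (Bs : Fin n → Set Ω),
    (∀ i, MeasurableSet[m] (Bs i)) ∧ Pairwise (Function.onFun Disjoint Bs) ∧
    (⋃ i, Bs i) = Set.univ ∧
    (∀ i, zd < (zs i : EReal) ∧ (zs i : EReal) < zu) ∧
    (∀ i, ∀ ω ∈ Bs i, φ ω = (zs i : EReal)) ∧
    (∀ i, ∀ᵐ ω ∂P, ω ∈ Bs i ∩ C → ρ (zs i) ω < 0)}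

/-- A standard family of conditional convex risk measures `(σ^z)_{z ∈ (zd, zu)}`. -/
structure IsStdFamily (F m : MeasurableSpace Ω) (P : @Measure Ω F)
    (σ : ℝ → (Ω → EReal) → Ω → EReal) (zd zu : EReal) : Prop where
  lt_bounds : zd < zu
  maps : ∀ z : ℝ, zd < (z : EReal) → (z : EReal) < zu → ∀ X ∈ Lbb F,
    Measurable[m] (σ z X) ∧ ∃ C : ℝ, ∀ ω, σ z X ω ≤ (C : EReal)
  boundedOnBounded : ∀ z : ℝ, zd < (z : EReal) → (z : EReal) < zu → ∀ X ∈ Lbb F,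
    (∃ C : ℝ, ∀ ω, X ω ≤ (C : EReal)) → ∃ c : ℝ, ∀ ω, (c : EReal) ≤ σ z X ω
  convex : ∀ z : ℝ, zd < (z : EReal) → (z : EReal) < zu →
    ∀ X ∈ Lbb F, ∀ Y ∈ Lbb F, ∀ c : ℝ, 0 ≤ c → c ≤ 1 →
    ∀ᵐ ω ∂P, σ z (fun ω' => (c : EReal) * X ω' + ((1 - c : ℝ) : EReal) * Y ω') ω ≤
      (c : EReal) * σ z X ω + ((1 - c : ℝ) : EReal) * σ z Y ω
  anti : ∀ z : ℝ, zd < (z : EReal) → (z : EReal) < zu → ∀ X Y : Ω → EReal,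
    (∀ ω, Y ω ≤ X ω) → ∀ᵐ ω ∂P, σ z X ω ≤ σ z Y ω
  transInv : ∀ z : ℝ, zd < (z : EReal) → (z : EReal) < zu → ∀ X ∈ Lbb F, ∀ ξ ∈ Lbb m,
    ∀ᵐ ω ∂P, σ z (fun ω' => X ω' + ξ ω') ω = σ z X ω - ξ ω
  loc : ∀ z : ℝ, zd < (z : EReal) → (z : EReal) < zu → ∀ X ∈ Lbb F,
    ∀ B : Set Ω, MeasurableSet[m] B →
    ∀ᵐ ω ∂P, ω ∈ B → σ z X ω = σ z (B.indicator X) ω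
  contBelow : ∀ z : ℝ, zd < (z : EReal) → (z : EReal) < zu →
    ∀ (Xs : ℕ → Ω → EReal) (X : Ω → EReal), (∀ n, Xs n ∈ Lbb F) → X ∈ Lbb F →
    (∀ ω, Monotone fun n => Xs n ω) → (∀ ω, X ω = ⨆ n, Xs n ω) →
    ∀ᵐ ω ∂P, σ z X ω = ⨅ n, σ z (Xs n) ω
  paths : ∀ X ∈ Lbb F, ∀ᵐ ω ∂P,
    MonotoneOn (fun z : ℝ => σ z X ω) {z : ℝ | zd < (z : EReal) ∧ (z : EReal) < zu} ∧
    ContinuousOn (fun z : ℝ => σ z X ω) {z : ℝ | zd < (z : EReal) ∧ (z : EReal) < zu}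
  botLim : zd = ⊥ →
    Tendsto (fun z : ℝ => essSup (σ z (fun _ => 0)) P) atBot (𝓝 (⊥ : EReal))

/-- The set `B_X = ∩_{z ∈ (zd,zu)} {σ^z(X) ≥ 0}`. -/
def BXset (σ : ℝ → (Ω → EReal) → Ω → EReal) (zd zu : EReal) (X : Ω → EReal) : Set Ω :=
  {ω | ∀ z : ℝ, zd < (z : EReal) → (z : EReal) < zu → 0 ≤ σ z X ω}

/-- `g` is the value at `X` of the performance measure generated by the standard
family `σ`:  `g = zd 1_{B_X} + 1_{B_X^c} esssup{φ simple : σ^{z_i}(X) < 0 on B_i ∩ B_X^c}`. -/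
def GeneratedBy (F m : MeasurableSpace Ω) (P : @Measure Ω F)
    (σ : ℝ → (Ω → EReal) → Ω → EReal) (zd zu : EReal)
    (X : Ω → EReal) (g : Ω → EReal) : Prop :=
  (∀ᵐ ω ∂P, ω ∈ BXset σ zd zu X → g ω = zd) ∧
  IsEssSupFamOn m P (SimpleFam m P (fun z => σ z X) zd zu ((BXset σ zd zu X)ᶜ)) g
    ((BXset σ zd zu X)ᶜ)

/-!
The sets `M^z(Xₙ)` increase with `n` and are contained in `M^z(X)`, which gives that `ρₙ`
decreases and dominates `ρ`. Conversely, let `ξ ∈ M^z(X)` and `c > 0`. Strict monotonicity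
gives `β(X + ξ + c) > z`, so by continuity from below `β(Xₙ + ξ + c) ≥ z` for some random
`n`; pasting `ξ + c` on that event with `+∞` off it (locality) yields an element of
`M^z(Xₙ)`, whence `ρₙ ≤ ξ + c` there. Letting `c ↓ 0`, `⨅ ρₙ` is an `m`-measurable lower bound of
`M^z(X)`, hence `⨅ ρₙ ≤ ρ`.
-/

namespace EReal

lemma tendsto_add_one_div_add_one (x : EReal) :
    Tendsto (fun k : ℕ => x + ((1 / ((k : ℝ) + 1) : ℝ) : EReal)) atTop (𝓝 x) := by
  have hε : Tendsto (fun k : ℕ => ((1 / ((k : ℝ) + 1) : ℝ) : EReal)) atTop (𝓝 0) :=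
    (continuous_coe_real_ereal.tendsto 0).comp tendsto_one_div_add_atTop_nhds_zero_nat
  have h := (EReal.continuousAt_add (p := (x, 0)) (Or.inr zero_ne_bot)
    (Or.inr zero_ne_top)).tendsto.comp (tendsto_const_nhds.prodMk_nhds hε)
  rwa [add_zero] at h

lemma le_of_forall_le_add_one_div_add_one {x y : EReal}
    (h : ∀ k : ℕ, y ≤ x + ((1 / ((k : ℝ) + 1) : ℝ) : EReal)) : y ≤ x :=
  ge_of_tendsto' (tendsto_add_one_div_add_one x) h

lemma iSup_add_of_monotone {a : ℕ → EReal} {b : EReal} (ha : Monotone a) (hb : b ≠ ⊥)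
    (hsup : ⨆ n, a n ≠ ⊥) : ⨆ n, (a n + b) = (⨆ n, a n) + b :=
  tendsto_nhds_unique (tendsto_atTop_iSup fun _ _ hij => add_le_add_left (ha hij) b)
    ((EReal.continuousAt_add (Or.inr hb) (Or.inl hsup)).tendsto.comp
      ((tendsto_atTop_iSup ha).prodMk_nhds tendsto_const_nhds))

end EReal

section Lbb

variable {m F : MeasurableSpace Ω}

lemma Lbb_mono (hm : m ≤ F) : Lbb m ⊆ Lbb F :=
  fun _ ⟨hX, hbdd⟩ => ⟨hX.mono hm le_rfl, hbdd⟩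

lemma add_mem_Lbb {X Y : Ω → EReal} (hX : X ∈ Lbb m) (hY : Y ∈ Lbb m) :
    (fun ω => X ω + Y ω) ∈ Lbb m := by
  obtain ⟨hXm, a, ha⟩ := hX
  obtain ⟨hYm, b, hb⟩ := hY
  exact ⟨hXm.add hYm, a + b, fun ω => by rw [EReal.coe_add]; exact add_le_add (ha ω) (hb ω)⟩

lemma const_mem_Lbb (c : ℝ) : (fun _ => (c : EReal)) ∈ Lbb m :=
  ⟨measurable_const, c, fun _ => le_rfl⟩

lemma top_mem_Lbb : (fun _ : Ω => (⊤ : EReal)) ∈ Lbb m :=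
  ⟨measurable_const, 0, fun _ => le_top⟩

lemma ne_bot_of_mem_Lbb {X : Ω → EReal} (hX : X ∈ Lbb m) (ω : Ω) : X ω ≠ ⊥ :=
  let ⟨_, c, hc⟩ := hX
  ne_bot_of_le_ne_bot (EReal.coe_ne_bot c) (hc ω)

end Lbb

lemma IsEssInfFam.ae_le_of_subset {F m : MeasurableSpace Ω} {P : @Measure Ω F}
    {S T : Set (Ω → EReal)} {ρS ρT : Ω → EReal} (hST : S ⊆ T)
    (hS : IsEssInfFam m P S ρS) (hT : IsEssInfFam m P T ρT) : ∀ᵐ ω ∂P, ρT ω ≤ ρS ω :=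
  hS.2.2 ρT hT.1 fun ξ hξ => hT.2.1 ξ (hST hξ)

namespace IsCPM

variable {F m : MeasurableSpace Ω} {P : @Measure Ω F} {β : (Ω → EReal) → Ω → EReal}
  {zd zu : EReal}

lemma Mset_mono (hCPM : IsCPM F m P β zd zu) (z : ℝ) {X Y : Ω → EReal}
    (hXY : ∀ ω, Y ω ≤ X ω) : Mset F m P β z Y ⊆ Mset F m P β z X := by
  rintro ξ ⟨hξ, hβ⟩
  refine ⟨hξ, ?_⟩
  filter_upwards [hβ, hCPM.mono _ _ fun ω => add_le_add_left (hXY ω) (ξ ω)] with ω h1 h2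
  exact h1.trans h2

lemma ae_eq_of_eqOn (hCPM : IsCPM F m P β zd zu) {X Y : Ω → EReal} (hX : X ∈ Lbb F)
    (hY : Y ∈ Lbb F) {B : Set Ω} (hB : MeasurableSet[m] B) (hXY : EqOn X Y B) :
    ∀ᵐ ω ∂P, ω ∈ B → β X ω = β Y ω := by
  filter_upwards [hCPM.loc X hX B hB, hCPM.loc Y hY B hB] with ω hXω hYω hω
  rw [hXω hω, hYω hω, indicator_congr hXY]

lemma ae_le_beta_top (hCPM : IsCPM F m P β zd zu) : ∀ᵐ ω ∂P, zu ≤ β (fun _ => ⊤) ω :=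
  hCPM.zu_least _ (hCPM.maps _ top_mem_Lbb).1 fun X _ => hCPM.mono _ X fun _ => le_top

lemma ae_le_of_le_beta_add (hCPM : IsCPM F m P β zd zu) (hm : m ≤ F) {z : ℝ}
    (hz : (z : EReal) ≤ zu) {V ξ ρV : Ω → EReal} (hV : V ∈ Lbb F) (hξ : ξ ∈ Lbb m)
    (hρV : IsEssInfFam m P (Mset F m P β z V) ρV) :
    ∀ᵐ ω ∂P, (z : EReal) ≤ β (fun ω' => V ω' + ξ ω') ω → ρV ω ≤ ξ ω := by
  classical
  set B := {ω | (z : EReal) ≤ β (fun ω' => V ω' + ξ ω') ω}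
  have hVξ : (fun ω => V ω + ξ ω) ∈ Lbb F := add_mem_Lbb hV (Lbb_mono hm hξ)
  have hB : MeasurableSet[m] B := (hCPM.maps _ hVξ).1 measurableSet_Ici
  set ξ' := B.piecewise ξ fun _ => ⊤
  have hξ'_mem : ∀ ω ∈ B, ξ' ω = ξ ω := fun ω hω => piecewise_eq_of_mem B ξ _ hω
  have hξ'_notMem : ∀ ω ∉ B, ξ' ω = ⊤ := fun ω hω => piecewise_eq_of_notMem B ξ _ hω
  have hξ' : ξ' ∈ Lbb m := by
    obtain ⟨hξm, c, hc⟩ := hξ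
    refine ⟨hξm.piecewise hB measurable_const, c, fun ω => ?_⟩
    by_cases hω : ω ∈ B
    · rw [hξ'_mem ω hω]; exact hc ω
    · rw [hξ'_notMem ω hω]; exact le_top
  have hVξ' : (fun ω => V ω + ξ' ω) ∈ Lbb F := add_mem_Lbb hV (Lbb_mono hm hξ')
  have hon := hCPM.ae_eq_of_eqOn hVξ' hVξ hB fun ω hω => by
    simp only [hξ'_mem ω hω]
  have hoff := hCPM.ae_eq_of_eqOn hVξ' top_mem_Lbb hB.compl fun ω hω => by
    simp only [hξ'_notMem ω hω, EReal.add_top_of_ne_bot (ne_bot_of_mem_Lbb hV ω)]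
  have hmem : ξ' ∈ Mset F m P β z V := by
    refine ⟨hξ', ?_⟩
    filter_upwards [hon, hoff, hCPM.ae_le_beta_top] with ω h1 h2 htop
    by_cases hω : ω ∈ B
    · rw [h1 hω]; exact hω
    · rw [h2 hω]; exact hz.trans htop
  filter_upwards [hρV.2.1 ξ' hmem] with ω hle hω
  rwa [hξ'_mem ω hω] at hle

lemma ae_lt_beta_add_const (hCPM : IsCPM F m P β zd zu) {z : ℝ} (hz₁ : zd < (z : EReal))
    (hz₂ : (z : EReal) < zu) {W : Ω → EReal} (hW : W ∈ Lbb F) {c : ℝ} (hc : 0 < c)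
    (hzW : ∀ᵐ ω ∂P, (z : EReal) ≤ β W ω) :
    ∀ᵐ ω ∂P, (z : EReal) < β (fun ω' => W ω' + c) ω := by
  have hWc : ∀ ω, W ω ≤ W ω + c :=
    fun ω => le_add_of_nonneg_right (EReal.coe_nonneg.2 hc.le)
  filter_upwards [hzW, hCPM.strictShift W hW c hc, hCPM.mono _ W hWc]
    with ω hle hstrict hmono
  rcases lt_or_ge (β W ω) zu with hlt | hge
  · exact hle.trans_lt (hstrict hlt (hz₁.trans_le (hle.trans hmono)))
  · exact hz₂.trans_le (hge.trans hmono)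

lemma ae_beta_add_eq_iSup (hCPM : IsCPM F m P β zd zu) (hm : m ≤ F)
    {Xs : ℕ → Ω → EReal} {X ξ : Ω → EReal} (hXs : ∀ n, Xs n ∈ Lbb F) (hX : X ∈ Lbb F)
    (hmono : ∀ ω, Monotone fun n => Xs n ω) (hsup : ∀ ω, X ω = ⨆ n, Xs n ω)
    (hξ : ξ ∈ Lbb m) :
    ∀ᵐ ω ∂P, β (fun ω' => X ω' + ξ ω') ω = ⨆ n, β (fun ω' => Xs n ω' + ξ ω') ω :=
  hCPM.contBelow _ _ (fun n => add_mem_Lbb (hXs n) (Lbb_mono hm hξ))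
    (add_mem_Lbb hX (Lbb_mono hm hξ)) (fun ω _ _ hij => add_le_add_left (hmono ω hij) _)
    fun ω => by
      rw [hsup ω, EReal.iSup_add_of_monotone (hmono ω) (ne_bot_of_mem_Lbb hξ ω)
        (hsup ω ▸ ne_bot_of_mem_Lbb hX ω)]

lemma ae_iInf_le_add_const (hCPM : IsCPM F m P β zd zu) (hm : m ≤ F) {z : ℝ}
    (hz₁ : zd < (z : EReal)) (hz₂ : (z : EReal) < zu)
    {Xs : ℕ → Ω → EReal} {X : Ω → EReal} (hXs : ∀ n, Xs n ∈ Lbb F) (hX : X ∈ Lbb F)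
    (hmono : ∀ ω, Monotone fun n => Xs n ω) (hsup : ∀ ω, X ω = ⨆ n, Xs n ω)
    {ρn : ℕ → Ω → EReal} (hn : ∀ n, IsEssInfFam m P (Mset F m P β z (Xs n)) (ρn n))
    {ξ : Ω → EReal} (hξ : ξ ∈ Mset F m P β z X) {c : ℝ} (hc : 0 < c) :
    ∀ᵐ ω ∂P, ⨅ n, ρn n ω ≤ ξ ω + c := by
  set ξc : Ω → EReal := fun ω => ξ ω + c
  have hξc : ξc ∈ Lbb m := add_mem_Lbb hξ.1 (const_mem_Lbb c)
  have hlt : ∀ᵐ ω ∂P, (z : EReal) < β (fun ω' => X ω' + ξc ω') ω := by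
    simpa only [ξc, add_assoc] using
      hCPM.ae_lt_beta_add_const hz₁ hz₂ (add_mem_Lbb hX (Lbb_mono hm hξ.1)) hc hξ.2
  filter_upwards [hlt, hCPM.ae_beta_add_eq_iSup hm hXs hX hmono hsup hξc,
    ae_all_iff.2 fun n => hCPM.ae_le_of_le_beta_add hm hz₂.le (hXs n) hξc (hn n)]
    with ω hzlt hsupω hρ
  obtain ⟨n, hzn⟩ := lt_iSup_iff.1 (hsupω ▸ hzlt)
  exact (iInf_le _ n).trans (hρ n hzn.le)

end IsCPM

/-- the induced risk measure `ρ^z_t` is continuous from below: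
`X_n ↑ X` implies `ρ^z_t(X_n) ↓ ρ^z_t(X)`. -/
theorem stmt_10 {Ω : Type*} (F m : MeasurableSpace Ω) (hm : m ≤ F) (P : @Measure Ω F)
    (β : (Ω → EReal) → Ω → EReal) (zd zu : EReal)
    (hCPM : IsCPM F m P β zd zu)
    (z : ℝ) (hz₁ : zd < (z : EReal)) (hz₂ : (z : EReal) < zu)
    (Xs : ℕ → Ω → EReal) (X : Ω → EReal)
    (hXs : ∀ n, Xs n ∈ Lbb F) (hX : X ∈ Lbb F)
    (hmono : ∀ ω, Monotone fun n => Xs n ω)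
    (hsup : ∀ ω, X ω = ⨆ n, Xs n ω)
    (ρn : ℕ → Ω → EReal) (ρ : Ω → EReal)
    (hn : ∀ n, IsEssInfFam m P (Mset F m P β z (Xs n)) (ρn n))
    (hρ : IsEssInfFam m P (Mset F m P β z X) ρ) :
    (∀ᵐ ω ∂P, Antitone fun n => ρn n ω) ∧ (∀ᵐ ω ∂P, ρ ω = ⨅ n, ρn n ω) := by
  have hsucc : ∀ n, Mset F m P β z (Xs n) ⊆ Mset F m P β z (Xs (n + 1)) :=
    fun n => hCPM.Mset_mono z fun ω => hmono ω n.le_succ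
  have hlim : ∀ n, Mset F m P β z (Xs n) ⊆ Mset F m P β z X :=
    fun n => hCPM.Mset_mono z fun ω => (hsup ω).symm ▸ le_iSup (fun k => Xs k ω) n
  have hlower : ∀ ξ ∈ Mset F m P β z X, ∀ᵐ ω ∂P, ⨅ n, ρn n ω ≤ ξ ω := fun ξ hξ => by
    filter_upwards [ae_all_iff.2 fun k : ℕ => hCPM.ae_iInf_le_add_const hm hz₁ hz₂ hXs hX
      hmono hsup hn hξ (c := 1 / ((k : ℝ) + 1)) (by positivity)] with ω h
    exact EReal.le_of_forall_le_add_one_div_add_one h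
  refine ⟨?_, ?_⟩
  · filter_upwards [ae_all_iff.2 fun n => (hn n).ae_le_of_subset (hsucc n) (hn (n + 1))]
      with ω h
    exact antitone_nat_of_succ_le h
  · filter_upwards [ae_all_iff.2 fun n => (hn n).ae_le_of_subset (hlim n) hρ,
      hρ.2.2 _ (Measurable.iInf fun n => (hn n).1) hlower] with ω hle hge
    exact le_antisymm (le_iInf hle) hge
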